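/- arXiv:2407.21701 — 3 statements merged into one kernel-verified Lean document; each statement's English description precedes it below -/
import Mathlib

section
/- Let m ∈ ℤ₊ᵏ with gcd(m) = 1. Then there do not exist distinct vectors a, b ∈ ℤ₊ᵏ with a ≺ m and b ≺ m (strict componentwise domination, a ⪯ m with strict inequality in at least one coordinate) such that (m − 2a) + (m − 2b) = α·m or (m − 2a) − (m − 2b) = α·m for some nonzero integer α. -/
/-!
An odd coordinate of `m` (one exists since `gcd(m) = 1`) forces `α` to be even, say `α = 2t`.
Both relations then say that `x - y = s • m` with `s ≠ 0` and `x, y` in the box `[0, m]`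
(take `x = a`, `y = m - b`, `s = -t` for the sum and `x = b`, `y = a`, `s = t` for the
difference). Comparing at a positive coordinate gives `s = ±1`, and then `{x, y}` is the pair
of corners `{0, m}`, which contradicts `a ≠ b`, `a ≠ m` and `b ≠ m`.
-/

theorem Finset.exists_odd_of_gcd_eq_one {ι : Type*} {s : Finset ι} {f : ι → ℤ}
    (h : s.gcd f = 1) : ∃ i ∈ s, Odd (f i) := by
  by_contra! hev
  have h2 : (2 : ℤ) ∣ s.gcd f :=
    Finset.dvd_gcd fun i hi => (Int.not_odd_iff_even.mp (hev i hi)).two_dvd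
  rw [h] at h2
  norm_num at h2

theorem eq_and_eq_zero_of_sub_eq {α : Type*} [AddCommGroup α] [PartialOrder α]
    [IsOrderedAddMonoid α] {a b m : α} (ha : a ≤ m) (hb : 0 ≤ b) (h : a - b = m) :
    a = m ∧ b = 0 := by
  rw [sub_eq_iff_eq_add'] at h
  obtain rfl : b = 0 := le_antisymm (by simpa [h] using ha) hb
  simpa using h

theorem eq_and_eq_zero_or_of_sub_eq_smul {ι : Type*} {a b m : ι → ℤ}
    (ha : a ∈ Set.Icc 0 m) (hb : b ∈ Set.Icc 0 m) {j : ι} (hj : 0 < m j) {s : ℤ} (hs : s ≠ 0)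
    (h : a - b = s • m) : a = m ∧ b = 0 ∨ a = 0 ∧ b = m := by
  have hs1 : s = 1 ∨ s = -1 := by
    have hsj : a j - b j = s * m j := congrFun h j
    have : (0 : ℤ) ≤ a j := ha.1 j
    have : (0 : ℤ) ≤ b j := hb.1 j
    have : a j ≤ m j := ha.2 j
    have : b j ≤ m j := hb.2 j
    have : s ≤ 1 := by nlinarith
    have : -1 ≤ s := by nlinarith
    omega
  rcases hs1 with rfl | rfl
  · exact Or.inl (eq_and_eq_zero_of_sub_eq ha.2 hb.1 (by simpa using h))
  · refine Or.inr (eq_and_eq_zero_of_sub_eq hb.2 ha.1 ?_).symm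
    rw [← neg_sub, h, neg_one_smul, neg_neg]

/-- no nontrivial integer-multiple relation `(m−2a) ± (m−2b) = α·m`
with distinct `a, b ≺ m`, when gcd(m) = 1. -/
theorem no_nontrivial_multiple_of_gcd_one
    {k : ℕ} (m : Fin k → ℤ) (hmpos : ∀ j, 0 ≤ m j)
    (hgcd : Finset.univ.gcd m = 1) :
    ¬ ∃ a b : Fin k → ℤ, (∀ j, 0 ≤ a j) ∧ (∀ j, 0 ≤ b j) ∧ a ≠ b ∧
      ((∀ j, a j ≤ m j) ∧ a ≠ m) ∧ ((∀ j, b j ≤ m j) ∧ b ≠ m) ∧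
      ∃ α : ℤ, α ≠ 0 ∧
        ((∀ j, (m j - 2 * a j) + (m j - 2 * b j) = α * m j) ∨
         (∀ j, (m j - 2 * a j) - (m j - 2 * b j) = α * m j)) := by
  rintro ⟨a, b, ha, hb, hab, ⟨ham, hane⟩, ⟨hbm, hbne⟩, α, hα, hrel⟩
  obtain ⟨j, -, hj⟩ := Finset.exists_odd_of_gcd_eq_one hgcd
  have hmj : 0 < m j := (hmpos j).lt_of_ne' (by rintro h; simp [h] at hj)
  obtain ⟨t, rfl⟩ : Even α := by
    have : Even (α * m j) := by
      rcases hrel with h | h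
      · exact ⟨m j - a j - b j, by linarith [h j]⟩
      · exact ⟨b j - a j, by linarith [h j]⟩
    exact (Int.even_mul.mp this).resolve_right (Int.not_even_iff_odd.mpr hj)
  have ht : t ≠ 0 := by omega
  have hmb : m - b ∈ Set.Icc 0 m := ⟨sub_nonneg.mpr hbm, sub_le_self m hb⟩
  rcases hrel with hsum | hdiff
  · have h : a - (m - b) = (-t) • m := funext fun i => by
      simp only [Pi.sub_apply, Pi.smul_apply, smul_eq_mul]; linarith [hsum i]
    rcases eq_and_eq_zero_or_of_sub_eq_smul ⟨ha, ham⟩ hmb hmj (neg_ne_zero.mpr ht) h with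
      ⟨rfl, -⟩ | ⟨rfl, hmb0⟩
    · exact hane rfl
    · exact hab (sub_eq_self.mp hmb0).symm
  · have h : b - a = t • m := funext fun i => by
      simp only [Pi.sub_apply, Pi.smul_apply, smul_eq_mul]; linarith [hdiff i]
    rcases eq_and_eq_zero_or_of_sub_eq_smul ⟨hb, hbm⟩ ⟨ha, ham⟩ hmj ht h with
      ⟨rfl, -⟩ | ⟨-, rfl⟩
    · exact hbne rfl
    · exact hane rfl
end

section
/- Let Λ = diag(λ₁,…,λₙ) with all λᵢ ≥ 0 and Σλᵢ = 1, and let v ∈ ℝⁿ satisfy λᵢ ≥ |vᵢ| for all i. Then the symmetric matrix A = Λ − v vᵀ is positive semidefinite. -/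
/-!
With `|vᵢ| ≤ λᵢ`, the triangle inequality and the weighted Cauchy–Schwarz inequality give
`(v ⬝ᵥ x)² ≤ (∑ λᵢ |xᵢ|)² ≤ (∑ λᵢ) (∑ λᵢ xᵢ²)`, and the right-hand side is at most the quadratic
form `∑ λᵢ xᵢ²` of `diag λ` as soon as `∑ λᵢ ≤ 1`.
-/

open Matrix

variable {ι α : Type*} [Fintype ι]

theorem sq_dotProduct_le_of_abs_le {l v : ι → ℝ} (hlv : ∀ i, |v i| ≤ l i) (x : ι → ℝ) :
    (v ⬝ᵥ x) ^ 2 ≤ (∑ i, l i) * ∑ i, l i * x i ^ 2 := by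
  have hl : ∀ i, 0 ≤ l i := fun i ↦ (abs_nonneg _).trans (hlv i)
  have habs : |v ⬝ᵥ x| ≤ ∑ i, l i * |x i| :=
    (Finset.abs_sum_le_sum_abs _ _).trans <| Finset.sum_le_sum fun i _ ↦ by
      rw [abs_mul]
      exact mul_le_mul_of_nonneg_right (hlv i) (abs_nonneg _)
  calc (v ⬝ᵥ x) ^ 2 ≤ (∑ i, l i * |x i|) ^ 2 := sq_le_sq' (abs_le.mp habs).1 (abs_le.mp habs).2
    _ ≤ (∑ i, l i) * ∑ i, l i * x i ^ 2 :=
      Finset.sum_sq_le_sum_mul_sum_of_sq_le_mul _ (fun i _ ↦ hl i)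
        (fun i _ ↦ mul_nonneg (hl i) (sq_nonneg _)) fun i _ ↦ by rw [mul_pow, sq_abs, sq, mul_assoc]

namespace Matrix

theorem dotProduct_diagonal_mulVec [CommSemiring α] [DecidableEq ι] (l x : ι → α) :
    x ⬝ᵥ (diagonal l *ᵥ x) = ∑ i, l i * x i ^ 2 := by
  simp only [dotProduct, mulVec_diagonal]
  exact Finset.sum_congr rfl fun i _ ↦ by ring

theorem dotProduct_vecMulVec_mulVec [CommSemiring α] (v w x : ι → α) :
    x ⬝ᵥ (vecMulVec v w *ᵥ x) = (x ⬝ᵥ v) * (w ⬝ᵥ x) := by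
  rw [vecMulVec_mulVec, op_smul_eq_smul, dotProduct_smul, smul_eq_mul, mul_comm]

theorem posSemidef_diagonal_sub_vecMulVec_self [DecidableEq ι] {l v : ι → ℝ}
    (hlv : ∀ i, |v i| ≤ l i) (hsum : ∑ i, l i ≤ 1) :
    (diagonal l - vecMulVec v v).PosSemidef := by
  have hvv : (vecMulVec v v).IsHermitian := by
    simpa using (posSemidef_vecMulVec_self_star v).isHermitian
  refine PosSemidef.of_dotProduct_mulVec_nonneg ((isHermitian_diagonal l).sub hvv) fun x ↦ ?_
  have hquad : 0 ≤ ∑ i, l i * x i ^ 2 :=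
    Finset.sum_nonneg fun i _ ↦ mul_nonneg ((abs_nonneg _).trans (hlv i)) (sq_nonneg _)
  have hle : (v ⬝ᵥ x) ^ 2 ≤ ∑ i, l i * x i ^ 2 :=
    (sq_dotProduct_le_of_abs_le hlv x).trans (mul_le_of_le_one_left hquad hsum)
  rw [star_trivial, sub_mulVec, dotProduct_sub, dotProduct_diagonal_mulVec,
    dotProduct_vecMulVec_mulVec, dotProduct_comm x v, ← sq]
  exact sub_nonneg.mpr hle

end Matrix

theorem diagonal_sub_outer_posSemidef_general
    {n : ℕ} (l v : Fin n → ℝ)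
    (hsum : ∑ i, l i = 1)
    (hlv : ∀ i, |v i| ≤ l i) :
    (Matrix.diagonal l - Matrix.vecMulVec v v).PosSemidef :=
  posSemidef_diagonal_sub_vecMulVec_self hlv hsum.le

/-- `diag(λ) − v vᵀ` is positive semidefinite when `λᵢ ≥ |vᵢ|`,
`λᵢ ≥ 0` and `Σ λᵢ = 1`. -/
theorem diagonal_sub_outer_posSemidef
    {n : ℕ} (l v : Fin n → ℝ)
    (hl : ∀ i, 0 ≤ l i) (hsum : ∑ i, l i = 1)
    (hlv : ∀ i, |v i| ≤ l i) :
    (Matrix.diagonal l - Matrix.vecMulVec v v).PosSemidef :=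
  diagonal_sub_outer_posSemidef_general l v hsum hlv
end

section
/- Let A = Λ − v vᵀ with Λ = diag(λ) diagonal, λᵢ ≥ 0, Σλᵢ = 1, v ∈ ℝⁿ, and λᵢ ≥ |vᵢ| for all i. Then rank Λ ≥ rank A ≥ rank Λ − 1, and rank A = rank Λ − 1 if and only if λᵢ = |vᵢ| for every i. -/
/-!
Write `D = diagonal l` and `A = D - v vᵀ`. Since `lᵢ = 0` forces `vᵢ = 0`, `ker D ⊆ ker A`, so
`rank A ≤ rank D`, while subadditivity of rank gives `rank D ≤ rank A + 1`. The rank drops iff some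
`x ∈ ker A` has `D x ≠ 0`, i.e. after rescaling, iff `D x = v` and `v ⬝ x = 1` for some `x`. For such
`x` we have `vᵢ xᵢ = lᵢ xᵢ² ≤ lᵢ` termwise (because `|lᵢ xᵢ| = |vᵢ| ≤ lᵢ`), and both sides sum to `1`,
so `vᵢ xᵢ = lᵢ` and hence `vᵢ² = lᵢ²`. Conversely, if `l = |v|` then `x = sign v` works.
-/

open Matrix

namespace Matrix

open LinearMap

variable {m n K : Type*} [Fintype n] [Field K]

theorem rank_add_le [Fintype m] (A B : Matrix m n K) : (A + B).rank ≤ A.rank + B.rank := by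
  rw [rank, rank, rank, mulVecLin_add]
  exact (Submodule.finrank_mono (range_add_le _ _)).trans
    (Submodule.finrank_add_le_finrank_add_finrank _ _)

theorem rank_add_finrank_ker (A : Matrix m n K) :
    A.rank + Module.finrank K (ker A.mulVecLin) = Fintype.card n := by
  rw [rank, finrank_range_add_finrank_ker, Module.finrank_fintype_fun_eq_card]

theorem rank_le_rank_of_ker_le {A B : Matrix m n K} (h : ker B.mulVecLin ≤ ker A.mulVecLin) :
    A.rank ≤ B.rank := by
  have := Submodule.finrank_mono h
  have := rank_add_finrank_ker A
  have := rank_add_finrank_ker B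
  omega

theorem rank_lt_rank_iff_of_ker_le {A B : Matrix m n K} (h : ker B.mulVecLin ≤ ker A.mulVecLin) :
    A.rank < B.rank ↔ ¬ ker A.mulVecLin ≤ ker B.mulVecLin := by
  have hA := rank_add_finrank_ker A
  have hB := rank_add_finrank_ker B
  constructor
  · intro hlt hle
    have := Submodule.finrank_mono hle
    omega
  · intro hnle
    have := Submodule.finrank_lt_finrank_of_lt (lt_of_le_of_ne h fun heq => hnle heq.ge)
    omega

theorem rank_le_rank_sub_vecMulVec_add_one [Fintype m] (D : Matrix m n K) (u : m → K) (w : n → K) :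
    D.rank ≤ (D - vecMulVec u w).rank + 1 := by
  simpa using (rank_add_le (D - vecMulVec u w) (vecMulVec u w)).trans
    (Nat.add_le_add_left (rank_vecMulVec_le u w) _)

theorem mulVec_sub_vecMulVec_self (D : Matrix n n K) (v x : n → K) :
    (D - vecMulVec v v) *ᵥ x = D *ᵥ x - (v ⬝ᵥ x) • v := by
  rw [sub_mulVec, vecMulVec_mulVec, op_smul_eq_smul]

theorem not_ker_sub_vecMulVec_self_le_ker_iff (D : Matrix n n K) (v : n → K) :
    ¬ ker (D - vecMulVec v v).mulVecLin ≤ ker D.mulVecLin ↔ ∃ x, D *ᵥ x = v ∧ v ⬝ᵥ x = 1 := by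
  simp only [SetLike.le_def, mem_ker, mulVecLin_apply, mulVec_sub_vecMulVec_self, sub_eq_zero,
    not_forall]
  constructor
  · rintro ⟨x, hx, hDx⟩
    have hc : v ⬝ᵥ x ≠ 0 := fun hc => hDx (by rw [hx, hc, zero_smul])
    exact ⟨(v ⬝ᵥ x)⁻¹ • x, by rw [mulVec_smul, hx, smul_smul, inv_mul_cancel₀ hc, one_smul],
      by rw [dotProduct_smul, smul_eq_mul, inv_mul_cancel₀ hc]⟩
  · rintro ⟨x, hx, hvx⟩
    refine ⟨x, by rw [hx, hvx, one_smul], fun hx0 => ?_⟩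
    rw [hx0] at hx
    simp [← hx] at hvx

variable [DecidableEq n]

theorem ker_diagonal_le_ker_sub_vecMulVec_self {l v : n → K}
    (hv : ∀ i, l i = 0 → v i = 0) :
    ker (diagonal l).mulVecLin ≤ ker (diagonal l - vecMulVec v v).mulVecLin := by
  intro x hx
  rw [mem_ker, mulVecLin_apply] at hx ⊢
  have hlx i : l i * x i = 0 := by simpa [mulVec_diagonal] using congrFun hx i
  have hvx : v ⬝ᵥ x = 0 := Finset.sum_eq_zero fun i _ => by
    rcases mul_eq_zero.mp (hlx i) with h | h <;> simp [hv i, h]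
  rw [mulVec_sub_vecMulVec_self, hx, hvx, zero_smul, sub_zero]

theorem exists_diagonal_mulVec_eq_and_dotProduct_eq_one_iff {l v : n → ℝ}
    (hsum : ∑ i, l i = 1) (hlv : ∀ i, |v i| ≤ l i) :
    (∃ x, diagonal l *ᵥ x = v ∧ v ⬝ᵥ x = 1) ↔ ∀ i, l i = |v i| := by
  have hl i : 0 ≤ l i := (abs_nonneg _).trans (hlv i)
  constructor
  · rintro ⟨x, hx, hvx⟩ i
    have hlx j : l j * x j = v j := by simpa [mulVec_diagonal] using congrFun hx j
    have hle j : v j * x j ≤ l j := by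
      rcases (hl j).eq_or_lt with h0 | hpos
      · simp [← hlx j, ← h0]
      · refine le_of_mul_le_mul_left ?_ hpos
        calc l j * (v j * x j) = v j ^ 2 := by rw [← hlx j]; ring
          _ ≤ l j * l j := by rw [← sq, ← sq_abs]; exact pow_le_pow_left₀ (abs_nonneg _) (hlv j) 2
    have heq : v i * x i = l i := by
      have hgap : ∑ j, (l j - v j * x j) = 0 := by
        rw [Finset.sum_sub_distrib, hsum, ← hvx, dotProduct, sub_self]
      linarith [(Finset.sum_eq_zero_iff_of_nonneg fun j _ => sub_nonneg.mpr (hle j)).mp hgap i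
        (Finset.mem_univ i)]
    have hsq : v i ^ 2 = l i ^ 2 := by
      rw [← hlx i]; linear_combination l i * heq + l i * x i * hlx i
    rw [← sq_eq_sq₀ (hl i) (abs_nonneg _), sq_abs, hsq]
  · intro h
    refine ⟨fun i => SignType.sign (v i), funext fun i => ?_, ?_⟩
    · simp [mulVec_diagonal, h i]
    · simp [dotProduct, self_mul_sign, ← h, hsum]

end Matrix

theorem rank_diagonal_sub_outer_general
    {n : ℕ} (l v : Fin n → ℝ)
    (hsum : ∑ i, l i = 1)
    (hlv : ∀ i, |v i| ≤ l i)
    (A : Matrix (Fin n) (Fin n) ℝ)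
    (hA : A = Matrix.diagonal l - Matrix.vecMulVec v v) :
    A.rank ≤ (Matrix.diagonal l).rank ∧
      (Matrix.diagonal l).rank - 1 ≤ A.rank ∧
      (A.rank = (Matrix.diagonal l).rank - 1 ↔ ∀ i, l i = |v i|) := by
  subst hA
  have hker := ker_diagonal_le_ker_sub_vecMulVec_self (l := l) fun i hi =>
    abs_nonpos_iff.mp (hi ▸ hlv i)
  have hle := rank_le_rank_of_ker_le hker
  have hge := rank_le_rank_sub_vecMulVec_add_one (diagonal l) v v
  have hpos : 0 < (diagonal l).rank := by
    classical
    obtain ⟨i, -, hi⟩ := Finset.exists_ne_zero_of_sum_ne_zero (hsum ▸ one_ne_zero)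
    rw [rank_diagonal]
    exact Fintype.card_pos_iff.mpr ⟨⟨i, hi⟩⟩
  rw [← exists_diagonal_mulVec_eq_and_dotProduct_eq_one_iff hsum hlv,
    ← not_ker_sub_vecMulVec_self_le_ker_iff, ← rank_lt_rank_iff_of_ker_le hker]
  omega

/-- rank bounds for `A = Λ − v vᵀ`:
`rank Λ ≥ rank A ≥ rank Λ − 1`, with equality in the lower bound iff
`λᵢ = |vᵢ|` for every `i`. -/
theorem rank_diagonal_sub_outer
    {n : ℕ} (l v : Fin n → ℝ)
    (hl : ∀ i, 0 ≤ l i) (hsum : ∑ i, l i = 1)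
    (hlv : ∀ i, |v i| ≤ l i)
    (A : Matrix (Fin n) (Fin n) ℝ)
    (hA : A = Matrix.diagonal l - Matrix.vecMulVec v v) :
    A.rank ≤ (Matrix.diagonal l).rank ∧
      (Matrix.diagonal l).rank - 1 ≤ A.rank ∧
      (A.rank = (Matrix.diagonal l).rank - 1 ↔ ∀ i, l i = |v i|) :=
  rank_diagonal_sub_outer_general l v hsum hlv A hA
end
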